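/- arXiv:2507.17142 — 2 statements merged into one kernel-verified Lean document; each statement's English description precedes it below -/
import Mathlib

section
/- Let n ≥ 6 be an integer and let j satisfy 2 < j < n. Then the set of elements w of the standard family Fₙ with δ(v_{1,j}, w) = 1 is exactly {v_{2,j}, v_{1,j−1}, v_{1,j+1}, v_{j,n}}, where δ(v,w) := min(d(v,w), n − d(v,w)) and d is the Hamming distance. -/
open scoped symmDiff


/-- Indicator vector of the set of labels {i, i+1, …, j−1}, coordinates labelled 1,…,n. -/
def stdVec (n i j : ℕ) : Fin n → ZMod 2 :=
  fun k => if i ≤ k.val + 1 ∧ k.val + 1 < j then 1 else 0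

/-- δ(v,w) = min(d(v,w), n − d(v,w)), where d is the Hamming distance. -/

lemma indicator_ne (P Q : Prop) [Decidable P] [Decidable Q] :
    ((if P then (1:ZMod 2) else 0) ≠ (if Q then 1 else 0)) ↔ ¬(P ↔ Q) := by
  by_cases hP : P <;> by_cases hQ : Q <;> simp [hP, hQ]

lemma card_symmDiff (s t : Finset ℕ) :
    (s ∆ t).card = s.card + t.card - 2 * (s ∩ t).card := by
  rw [show s ∆ t = (s \ t) ∪ (t \ s) from rfl, Finset.card_union_of_disjoint]
  · have h1 := Finset.card_sdiff_add_card_inter s t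
    have h2 := Finset.card_sdiff_add_card_inter t s
    rw [Finset.inter_comm] at h2
    omega
  · exact disjoint_sdiff_sdiff

lemma card_symmDiff_Ico (a b c d : ℕ) :
    ((Finset.Ico a b) ∆ (Finset.Ico c d)).card
      = (b - a) + (d - c) - 2 * (min b d - max a c) := by
  rw [card_symmDiff, Finset.Ico_inter_Ico]
  simp [Nat.card_Ico]

lemma hd_eq (n a b c d : ℕ) (hb : b - 1 ≤ n) (hd2 : d - 1 ≤ n) :
    hammingDist (stdVec n a b) (stdVec n c d)
      = (Finset.Ico (a-1) (b-1) ∆ Finset.Ico (c-1) (d-1)).card := by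
  rw [hammingDist]
  apply Finset.card_bij (fun k _ => k.val)
  · intro k hk
    simp only [Finset.mem_filter, Finset.mem_univ, true_and, stdVec, indicator_ne] at hk
    simp only [Finset.mem_symmDiff, Finset.mem_Ico]
    omega
  · intro k₁ _ k₂ _ h; exact Fin.val_injective h
  · intro m hm
    simp only [Finset.mem_symmDiff, Finset.mem_Ico] at hm
    have hmn : m < n := by omega
    refine ⟨⟨m, hmn⟩, ?_, rfl⟩
    simp only [Finset.mem_filter, Finset.mem_univ, true_and, stdVec, indicator_ne]
    omega

lemma hd_val (n a b c d : ℕ) (hb : b - 1 ≤ n) (hd2 : d - 1 ≤ n) :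
    hammingDist (stdVec n a b) (stdVec n c d)
      = ((b-1) - (a-1)) + ((d-1) - (c-1)) - 2 * (min (b-1) (d-1) - max (a-1) (c-1)) := by
  rw [hd_eq n a b c d hb hd2, card_symmDiff_Ico]

def hdelta {n : ℕ} (v w : Fin n → ZMod 2) : ℕ :=
  min (hammingDist v w) (n - hammingDist v w)

/-- The standard family Fₙ: the zero vector together with the vectors v_{i,j}
for 1 ≤ i < j ≤ n. -/
def stdFamily (n : ℕ) : Finset (Fin n → ZMod 2) :=
  insert 0 ((((Finset.Icc 1 n) ×ˢ (Finset.Icc 1 n)).filter fun p => p.1 < p.2).image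
    fun p => stdVec n p.1 p.2)

theorem stmt_8 (n j : ℕ) (hn : 6 ≤ n) (hj : 2 < j) (hj' : j < n) :
    (stdFamily n).filter (fun w => hdelta (stdVec n 1 j) w = 1) =
      {stdVec n 2 j, stdVec n 1 (j - 1), stdVec n 1 (j + 1), stdVec n j n} := by
  have key : ∀ w, hdelta (stdVec n 1 j) w = min (hammingDist (stdVec n 1 j) w) (n - hammingDist (stdVec n 1 j) w) := fun _ => rfl
  have hzero : (0 : Fin n → ZMod 2) = stdVec n 1 1 := by
    funext k; simp [stdVec]
  ext w
  rw [Finset.mem_filter]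
  simp only [stdFamily, hdelta, Finset.mem_filter, Finset.mem_insert, Finset.mem_image,
    Finset.mem_product, Finset.mem_Icc, Finset.mem_singleton, Prod.exists]
  constructor
  · rintro ⟨rfl | ⟨i', j', hp, rfl⟩, hδ⟩
    · exfalso
      rw [hzero, hd_val n 1 j 1 1 (by omega) (by omega)] at hδ
      omega
    · obtain ⟨⟨⟨ha1, ha2⟩, hb1, hb2⟩, h5⟩ := hp
      rw [hd_val n 1 j i' j' (by omega) (by omega)] at hδ
      have hcl : (i'=2 ∧ j'=j) ∨ (i'=1 ∧ j'=j-1) ∨ (i'=1 ∧ j'=j+1) ∨ (i'=j ∧ j'=n) := by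
        omega
      rcases hcl with ⟨rfl, rfl⟩ | ⟨rfl, rfl⟩ | ⟨rfl, rfl⟩ | ⟨rfl, rfl⟩
      · exact Or.inl rfl
      · exact Or.inr (Or.inl rfl)
      · exact Or.inr (Or.inr (Or.inl rfl))
      · exact Or.inr (Or.inr (Or.inr rfl))
  · rintro (rfl | rfl | rfl | rfl)
    · refine ⟨Or.inr ⟨2, j, ⟨⟨⟨by omega, by omega⟩, by omega, by omega⟩, by omega⟩, rfl⟩, ?_⟩
      rw [hd_val n 1 j 2 j (by omega) (by omega)]; omega
    · refine ⟨Or.inr ⟨1, j-1, ⟨⟨⟨by omega, by omega⟩, by omega, by omega⟩, by omega⟩, rfl⟩, ?_⟩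
      rw [hd_val n 1 j 1 (j-1) (by omega) (by omega)]; omega
    · refine ⟨Or.inr ⟨1, j+1, ⟨⟨⟨by omega, by omega⟩, by omega, by omega⟩, by omega⟩, rfl⟩, ?_⟩
      rw [hd_val n 1 j 1 (j+1) (by omega) (by omega)]; omega
    · refine ⟨Or.inr ⟨j, n, ⟨⟨⟨by omega, by omega⟩, by omega, by omega⟩, by omega⟩, rfl⟩, ?_⟩
      rw [hd_val n 1 j j n (by omega) (by omega)]; omega
end

section
/- Let n ≥ 6 be an integer. Then the set of elements w of the standard family Fₙ with δ(v_{n−1,n}, w) = 1 is exactly {0, v_{n−2,n}, v_{1,n−1}}, where δ(v,w) := min(d(v,w), n − d(v,w)) and d is the Hamming distance. -/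
open Finset

lemma stdVec_apply_ne_iff (n a b i j : ℕ) (k : Fin n) :
    stdVec n a b k ≠ stdVec n i j k ↔
      ¬((a ≤ k.val + 1 ∧ k.val + 1 < b) ↔ (i ≤ k.val + 1 ∧ k.val + 1 < j)) := by
  simp only [stdVec]
  split_ifs with h1 h2 h2 <;> simp [h1, h2]

lemma card_filter_label_mem_Ico {n i j : ℕ} (hi : 1 ≤ i) (hj : j ≤ n + 1) :
    #{k : Fin n | i ≤ k.val + 1 ∧ k.val + 1 < j} = j - i := by
  rw [← Nat.card_Ico i j]
  refine card_bij (fun k _ => k.val + 1) (fun k hk => ?_) (fun k _ k' _ h => Fin.ext (by omega))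
    (fun m hm => ?_)
  · simp only [mem_filter, mem_univ, true_and] at hk
    simp only [mem_Ico]
    omega
  · simp only [mem_Ico] at hm
    exact ⟨⟨m - 1, by omega⟩, by simp only [mem_filter, mem_univ, true_and]; omega, by simp; omega⟩

lemma hammingNorm_stdVec {n i j : ℕ} (hi : 1 ≤ i) (hj : j ≤ n + 1) :
    hammingNorm (stdVec n i j) = j - i := by
  rw [← card_filter_label_mem_Ico hi hj, hammingNorm]
  congr 1
  ext k
  simp [stdVec]

lemma hammingDist_stdVec_single {n m i j : ℕ} (hm : 1 ≤ m) (hmn : m ≤ n) (hi : 1 ≤ i)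
    (hj : j ≤ n + 1) :
    hammingDist (stdVec n m (m + 1)) (stdVec n i j) =
      if i ≤ m ∧ m < j then j - i - 1 else j - i + 1 := by
  set p : Fin n := ⟨m - 1, by omega⟩
  set S : Finset (Fin n) := {k : Fin n | i ≤ k.val + 1 ∧ k.val + 1 < j}
  have hS : #S = j - i := card_filter_label_mem_Ico hi hj
  have hpS : p ∈ S ↔ i ≤ m ∧ m < j := by
    simp only [S, p, mem_filter, mem_univ, true_and]
    omega
  have hdisagree : ∀ k : Fin n, stdVec n m (m + 1) k ≠ stdVec n i j k ↔ (k = p ↔ k ∉ S) := by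
    intro k
    simp only [stdVec_apply_ne_iff, S, p, mem_filter, mem_univ, true_and, Fin.ext_iff]
    omega
  rw [hammingDist]
  split_ifs with h
  · have : ({k | stdVec n m (m + 1) k ≠ stdVec n i j k} : Finset (Fin n)) = S.erase p := by
      ext k
      simp only [mem_filter, mem_univ, true_and, mem_erase, hdisagree]
      by_cases hk : k = p <;> simp [hk, hpS.2 h]
    rw [this, card_erase_of_mem (hpS.2 h), hS]
  · have : ({k | stdVec n m (m + 1) k ≠ stdVec n i j k} : Finset (Fin n)) = insert p S := by
      ext k
      simp only [mem_filter, mem_univ, true_and, mem_insert, hdisagree]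
      by_cases hk : k = p <;> simp [hk, hpS.not.2 h]
    rw [this, card_insert_of_notMem (hpS.not.2 h), hS]

lemma hdelta_stdVec_last_zero {n : ℕ} (hn : 2 ≤ n) : hdelta (stdVec n (n - 1) n) 0 = 1 := by
  rw [hdelta, hammingDist_zero_right, hammingNorm_stdVec (by omega) (by omega)]
  omega

lemma hdelta_stdVec_last_eq_one_iff {n i j : ℕ} (hn : 3 ≤ n) (hi : 1 ≤ i) (hij : i < j)
    (hj : j ≤ n) :
    hdelta (stdVec n (n - 1) n) (stdVec n i j) = 1 ↔ (i = n - 2 ∧ j = n) ∨ (i = 1 ∧ j = n - 1) := by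
  have hdist := hammingDist_stdVec_single (m := n - 1) (by omega) (by omega) hi (by omega : j ≤ n + 1)
  rw [Nat.sub_add_cancel (by omega)] at hdist
  rw [hdelta, hdist]
  split_ifs <;> omega

theorem stmt_11 (n : ℕ) (hn : 6 ≤ n) :
    (stdFamily n).filter (fun w => hdelta (stdVec n (n - 1) n) w = 1) =
      {0, stdVec n (n - 2) n, stdVec n 1 (n - 1)} := by
  ext w
  simp only [mem_filter, stdFamily, mem_insert, mem_image, mem_product, mem_Icc,
    mem_singleton, Prod.exists]
  constructor
  · rintro ⟨rfl | ⟨i, j, ⟨⟨⟨hi, -⟩, -, hj⟩, hij⟩, rfl⟩, hδ⟩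
    · exact Or.inl rfl
    · rcases (hdelta_stdVec_last_eq_one_iff (by omega) hi hij hj).1 hδ with ⟨rfl, rfl⟩ | ⟨rfl, rfl⟩
      · exact Or.inr (Or.inl rfl)
      · exact Or.inr (Or.inr rfl)
  · rintro (rfl | rfl | rfl)
    · exact ⟨Or.inl rfl, hdelta_stdVec_last_zero (by omega)⟩
    · exact ⟨Or.inr ⟨n - 2, n, by omega, rfl⟩,
        (hdelta_stdVec_last_eq_one_iff (by omega) (by omega) (by omega) le_rfl).2 (by omega)⟩
    · exact ⟨Or.inr ⟨1, n - 1, by omega, rfl⟩,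
        (hdelta_stdVec_last_eq_one_iff (by omega) le_rfl (by omega) (by omega)).2 (by omega)⟩
end
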